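/- arXiv:1901.06056 — 10 statements merged into one kernel-verified Lean document; each statement's English description precedes it below -/
import Mathlib

section
/- If R is a CCR ring and I is a two-sided ideal of R, then the quotient ring R/I is a CCR ring. -/
/-- A ring is (left) primitive if it admits a faithful simple left module. -/
def IsPrimitiveRing (R : Type u) [Ring R] : Prop :=
  ∃ (M : Type u) (_ : AddCommGroup M) (_ : Module R M), IsSimpleModule R M ∧ FaithfulSMul R M

/-- A ring has a minimal left ideal if there is an atom in its lattice of left ideals. -/
def HasMinimalLeftIdeal (R : Type u) [Ring R] : Prop :=
  ∃ L : Submodule R R, IsAtom L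

/-- A ring is CCR if every primitive quotient is a simple ring with a minimal left ideal. -/
def IsCCRRing (R : Type u) [Ring R] : Prop :=
  ∀ P : TwoSidedIdeal R, IsPrimitiveRing P.ringCon.Quotient →
    IsSimpleRing P.ringCon.Quotient ∧ HasMinimalLeftIdeal P.ringCon.Quotient

/-!
A quotient `(R ⧸ I) ⧸ P` is isomorphic to `R ⧸ Q`, where `Q` is the preimage of `P` in `R`
(third isomorphism theorem). Being primitive, being simple and having a minimal left ideal are
invariant under ring isomorphism, so the CCR condition for `R` at `Q` gives it for `R ⧸ I` at `P`.
-/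

section RingEquiv

variable {A B : Type u} [Ring A] [Ring B]

theorem IsPrimitiveRing.of_ringEquiv (e : A ≃+* B) (h : IsPrimitiveRing A) :
    IsPrimitiveRing B := by
  obtain ⟨M, _, _, hsimple, hfaithful⟩ := h
  let _ : Module B M := Module.compHom M (e.symm : B →+* A)
  let idSemilinear : M →ₛₗ[(e.symm : B →+* A)] M :=
    { toFun := id, map_add' := fun _ _ => rfl, map_smul' := fun _ _ => rfl }
  refine ⟨M, inferInstance, inferInstance, ?_, ⟨fun {b₁ b₂} hb => ?_⟩⟩
  · exact (LinearMap.isSimpleModule_iff_of_bijective idSemilinear Function.bijective_id).mpr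
      hsimple
  · exact e.symm.injective (eq_of_smul_eq_smul (M := A) (α := M) hb)

theorem HasMinimalLeftIdeal.of_ringEquiv (e : A ≃+* B) (h : HasMinimalLeftIdeal A) :
    HasMinimalLeftIdeal B := by
  obtain ⟨L, hL⟩ := h
  have := RingHomInvPair.of_ringEquiv e
  have := RingHomInvPair.symm (e : A →+* B) (e.symm : B →+* A)
  exact ⟨_, ((Submodule.orderIsoMapComap e.toSemilinearEquiv).isAtom_iff L).mpr hL⟩

end RingEquiv

/-- If `R` is a CCR ring and `I` is a two-sided ideal of `R`, then `R/I` is CCR. -/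
theorem quotient_isCCRRing (R : Type u) [Ring R] (hR : IsCCRRing R) (I : TwoSidedIdeal R) :
    IsCCRRing I.ringCon.Quotient := by
  intro P hprim
  let e : (P.comap I.ringCon.mk').ringCon.Quotient ≃+* P.ringCon.Quotient :=
    P.ringCon.comapQuotientEquivOfSurj I.ringCon.mk' I.ringCon.mk'_surjective rfl
  obtain ⟨hsimple, hminimal⟩ := hR _ (hprim.of_ringEquiv e.symm)
  exact ⟨hsimple.of_ringEquiv e, hminimal.of_ringEquiv e⟩
end

section
/- Let R be a GCR ring. Then two simple left R-modules M and N are isomorphic as R-modules if and only if their annihilators in R are equal. -/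
/-- A ring is GCR if every primitive quotient has a minimal left ideal. -/
def IsGCRRing (R : Type u) [Ring R] : Prop :=
  ∀ P : TwoSidedIdeal R, IsPrimitiveRing P.ringCon.Quotient →
    HasMinimalLeftIdeal P.ringCon.Quotient

/-! If `M` and `N` have the same annihilator `P`, both become faithful simple modules over
`R ⧸ P`, which is therefore primitive and, `R` being GCR, has a minimal left ideal `L`. Every
faithful simple module over a ring is isomorphic to any of its minimal left ideals, so
`M ≅ L ≅ N` over `R ⧸ P`, hence over `R`. -/

section RingHomCompatibleSMul

variable {R S : Type*} [Ring R] [Ring S] (f : R →+* S)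
  {M : Type*} [AddCommGroup M] [Module R M] [Module S M]

theorem isSimpleModule_iff_of_surjective (hf : Function.Surjective f)
    (hfM : ∀ (r : R) (m : M), f r • m = r • m) :
    IsSimpleModule S M ↔ IsSimpleModule R M := by
  have : RingHomSurjective f := ⟨hf⟩
  let id' : M →ₛₗ[f] M :=
    { toFun := id
      map_add' := fun _ _ ↦ rfl
      map_smul' := fun r m ↦ (hfM r m).symm }
  exact (id'.isSimpleModule_iff_of_bijective Function.bijective_id).symm

theorem faithfulSMul_of_annihilator_le_ker (hf : Function.Surjective f)
    (hfM : ∀ (r : R) (m : M), f r • m = r • m)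
    (hker : Module.annihilator R M ≤ RingHom.ker f) : FaithfulSMul S M := by
  rw [← Module.annihilator_eq_bot, eq_bot_iff]
  intro s hs
  obtain ⟨r, rfl⟩ := hf s
  refine hker (Module.mem_annihilator.mpr fun m ↦ ?_)
  rw [← hfM]
  exact Module.mem_annihilator.mp hs m

theorem LinearMap.compatibleSMul_of_ringHom {N : Type*} [AddCommGroup N] [Module R N]
    [Module S N] (hfM : ∀ (r : R) (m : M), f r • m = r • m)
    (hfN : ∀ (r : R) (n : N), f r • n = r • n) : LinearMap.CompatibleSMul M N R S :=
  ⟨fun g r m ↦ by rw [← hfM, g.map_smul, hfN]⟩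

end RingHomCompatibleSMul

abbrev TwoSidedIdeal.moduleQuotient {R : Type*} [Ring R] (P : TwoSidedIdeal R)
    (M : Type*) [AddCommGroup M] [Module R M] (hP : P.asIdeal ≤ Module.annihilator R M) :
    Module P.ringCon.Quotient M :=
  Module.compHom M <| P.ringCon.lift (Module.toAddMonoidEnd R M) fun x y hxy ↦
    AddMonoidHom.ext fun m ↦ show x • m = y • m from sub_eq_zero.mp <| by
      rw [← sub_smul]
      exact Module.mem_annihilator.mp
        (hP (TwoSidedIdeal.mem_asIdeal.mpr ((P.rel_iff x y).mp hxy))) m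

theorem IsPrimitiveRing.of_faithfulSMul {S : Type u} [Ring S] (X : Type*) [AddCommGroup X]
    [Module S X] [IsSimpleModule S X] [FaithfulSMul S X] : IsPrimitiveRing S := by
  obtain ⟨I, -, ⟨e⟩⟩ := isSimpleModule_iff_quot_maximal.mp ‹IsSimpleModule S X›
  refine ⟨S ⧸ I, inferInstance, inferInstance, IsSimpleModule.congr e.symm, ?_⟩
  rw [← Module.annihilator_eq_bot, ← e.annihilator_eq, Module.annihilator_eq_bot]
  infer_instance

-- By faithfulness `l ↦ l • x` is nonzero for a suitable `x`, hence bijective by Schur.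
theorem Submodule.nonempty_linearEquiv_of_isAtom {S : Type*} [Ring S] {L : Submodule S S}
    (hL : IsAtom L) (X : Type*) [AddCommGroup X] [Module S X] [IsSimpleModule S X]
    [FaithfulSMul S X] : Nonempty (L ≃ₗ[S] X) := by
  have := isSimpleModule_iff_isAtom.mpr hL
  obtain ⟨a, haL, ha⟩ := Submodule.exists_mem_ne_zero_of_ne_bot hL.1
  obtain ⟨x, hx⟩ : ∃ x : X, a • x ≠ 0 := by
    by_contra! h
    have : a ∈ Module.annihilator S X := Module.mem_annihilator.mpr h
    rw [Module.annihilator_eq_bot.mpr ‹_›] at this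
    exact ha this
  let g := LinearMap.toSpanSingleton S X x ∘ₗ L.subtype
  have hg : g ≠ 0 := fun h ↦ hx (LinearMap.congr_fun h ⟨a, haL⟩)
  exact ⟨.ofBijective g (LinearMap.bijective_of_ne_zero hg)⟩

/-- Let `R` be a GCR ring.  Two simple left `R`-modules are isomorphic if and only if they
have the same annihilator. -/
theorem gcr_simple_iso_iff_annihilator_eq (R : Type u) [Ring R] (hR : IsGCRRing R)
    (M : Type v) [AddCommGroup M] [Module R M] (hM : IsSimpleModule R M)
    (N : Type w) [AddCommGroup N] [Module R N] (hN : IsSimpleModule R N) :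
    Nonempty (M ≃ₗ[R] N) ↔ Module.annihilator R M = Module.annihilator R N := by
  refine ⟨fun ⟨e⟩ ↦ e.annihilator_eq, fun h ↦ ?_⟩
  set P := (Module.annihilator R M).toTwoSided
  have hPM : P.asIdeal = Module.annihilator R M := Ideal.asIdeal_toTwoSided _
  have hPN : P.asIdeal = Module.annihilator R N := hPM.trans h
  let _ := P.moduleQuotient M hPM.le
  let _ := P.moduleQuotient N hPN.le
  have hmk := P.ringCon.mk'_surjective
  have hker : P.asIdeal ≤ RingHom.ker P.ringCon.mk' := fun r hr ↦
    RingHom.mem_ker.mpr (P.ringCon.eq.mpr (TwoSidedIdeal.mem_asIdeal.mp hr))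
  have := (isSimpleModule_iff_of_surjective _ hmk (M := M) fun _ _ ↦ rfl).mpr hM
  have := (isSimpleModule_iff_of_surjective _ hmk (M := N) fun _ _ ↦ rfl).mpr hN
  have := faithfulSMul_of_annihilator_le_ker _ hmk (M := M) (fun _ _ ↦ rfl) (hPM ▸ hker)
  have := faithfulSMul_of_annihilator_le_ker _ hmk (M := N) (fun _ _ ↦ rfl) (hPN ▸ hker)
  obtain ⟨L, hL⟩ := hR P (.of_faithfulSMul M)
  obtain ⟨eM⟩ := Submodule.nonempty_linearEquiv_of_isAtom hL M
  obtain ⟨eN⟩ := Submodule.nonempty_linearEquiv_of_isAtom hL N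
  have := LinearMap.compatibleSMul_of_ringHom P.ringCon.mk' (M := M) (N := N)
    (fun _ _ ↦ rfl) (fun _ _ ↦ rfl)
  exact ⟨(eM.symm.trans eN).restrictScalars R⟩
end

section
/- A ring R is GCR if and only if for every simple left R-module M there exists r ∈ R acting on M as a nonzero finite rank operator over the division ring D = End_R(M); that is, r•M ≠ 0 and the D-submodule of M generated by the set r•M = {r•m : m ∈ M} is a finitely generated D-module. -/
universe u

/-!
For a simple module `M` with `D = End_R M` and `x ≠ 0`, an element `y` lies in `D x` exactly
when every `s ∈ R` killing `x` kills `y`. If `R / ann M` has a minimal left ideal `L` and `a ∈ L`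
acts nontrivially at `m₁`, then `x ↦ x • m₁` embeds `L` into `M`, which gives this annihilator
condition between `a • m₁` and every `a • m`: `a` acts with rank one. Conversely, an element of
least nonzero finite rank has rank one (otherwise some `s` kills part of its image, and `s * r`
has smaller rank), and a rank-one `b` generates a minimal left ideal of the primitive quotient,
because every `t * b` acting nontrivially can be multiplied back to `b`.
-/

open Module Submodule

theorem Submodule.finrank_map_lt_of_mem_ker {K V W : Type*} [DivisionRing K] [AddCommGroup V]
    [Module K V] [AddCommGroup W] [Module K W] (f : V →ₗ[K] W) {U : Submodule K V}
    [FiniteDimensional K U] {x : V} (hxU : x ∈ U) (hx : x ≠ 0) (hfx : f x = 0) :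
    finrank K (U.map f) < finrank K U := by
  have hker : LinearMap.ker (f.domRestrict U) ≠ ⊥ :=
    (Submodule.ne_bot_iff _).2 ⟨⟨x, hxU⟩, hfx, by simpa using hx⟩
  have hrank := (f.domRestrict U).finrank_range_add_finrank_ker
  rw [LinearMap.range_domRestrict] at hrank
  have := Nat.pos_of_ne_zero (mt finrank_eq_zero.1 hker)
  omega

theorem exists_smul_ne_zero_of_ne_zero {S M : Type*} [Ring S] [AddCommGroup M] [Module S M]
    [FaithfulSMul S M] {a : S} (ha : a ≠ 0) : ∃ m : M, a • m ≠ 0 := by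
  by_contra! h
  exact ha (eq_of_smul_eq_smul fun m => by rw [h m, zero_smul])

theorem eq_zero_of_mem_of_smul_eq_zero {S M : Type*} [Ring S] [AddCommGroup M] [Module S M]
    {L : Submodule S S} (hL : IsAtom L) {a : S} (ha : a ∈ L) {m : M} (ham : a • m ≠ 0)
    {c : S} (hc : c ∈ L) (hcm : c • m = 0) : c = 0 := by
  let K := LinearMap.ker (LinearMap.toSpanSingleton S M m)
  have hcK : c ∈ K := by simpa [K] using hcm
  rcases hL.le_iff.1 (inf_le_left : L ⊓ K ≤ L) with hbot | hLK
  · simpa [hbot] using mem_inf.2 ⟨hc, hcK⟩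
  · exact (ham (by simpa [K] using (hLK.symm ▸ ha : a ∈ L ⊓ K).2)).elim

theorem isAtom_span_singleton_of_forall_exists_mul_eq {S : Type*} [Ring S] {b : S} (hb : b ≠ 0)
    (h : ∀ t : S, t * b ≠ 0 → ∃ t' : S, t' * (t * b) = b) : IsAtom (span S {b}) := by
  refine ⟨by simpa using hb, fun L hL => ?_⟩
  by_contra hne
  obtain ⟨c, hcL, hc0⟩ := (Submodule.ne_bot_iff L).1 hne
  obtain ⟨t, rfl⟩ := mem_span_singleton.1 (hL.le hcL)
  obtain ⟨t', ht'⟩ := h t hc0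
  have hbL : b ∈ L := ht' ▸ L.smul_mem t' hcL
  exact hL.not_ge (span_le.2 (Set.singleton_subset_iff.2 hbL))

theorem isSimpleModule_iff_of_surjective_s5 {R S M : Type*} [Ring R] [Ring S] [AddCommGroup M]
    [Module R M] [Module S M] (π : R →+* S) (hπ : Function.Surjective π)
    (h : ∀ (r : R) (m : M), π r • m = r • m) : IsSimpleModule R M ↔ IsSimpleModule S M :=
  have : RingHomSurjective π := ⟨hπ⟩
  LinearMap.isSimpleModule_iff_of_bijective (σ := π)
    { toFun := id, map_add' := fun _ _ => rfl, map_smul' := fun r m => (h r m).symm }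
    Function.bijective_id

section FiniteRank

variable {R : Type*} (M : Type*) [Ring R] [AddCommGroup M] [Module R M]

def smulRangeSpan (r : R) : Submodule (End R M) M :=
  span (End R M) (Set.range fun m : M => r • m)

def IsNonzeroFiniteRank (r : R) : Prop :=
  (∃ m : M, r • m ≠ 0) ∧ (smulRangeSpan M r).FG

def IsRankOne (r : R) : Prop :=
  ∃ u : M, r • u ≠ 0 ∧ ∀ m : M, r • m ∈ span (End R M) {r • u}

variable {M}

theorem smul_mem_smulRangeSpan (r : R) (m : M) : r • m ∈ smulRangeSpan M r :=
  subset_span ⟨m, rfl⟩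

theorem map_smulRangeSpan (s r : R) :
    (smulRangeSpan M r).map (DistribSMul.toLinearMap (End R M) M s) = smulRangeSpan M (s * r) := by
  rw [smulRangeSpan, smulRangeSpan, map_span, ← Set.range_comp]
  congr 2
  funext m
  exact (mul_smul s r m).symm

theorem IsRankOne.isNonzeroFiniteRank {r : R} (hr : IsRankOne M r) : IsNonzeroFiniteRank M r := by
  obtain ⟨u, hu, hspan⟩ := hr
  refine ⟨⟨u, hu⟩, ?_⟩
  have : smulRangeSpan M r = span (End R M) {r • u} :=
    le_antisymm (span_le.2 (Set.range_subset_iff.2 hspan))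
      (span_le.2 (Set.singleton_subset_iff.2 (smul_mem_smulRangeSpan r u)))
  exact this ▸ fg_span_singleton _

theorem mem_span_singleton_end_iff [IsSimpleModule R M] {x y : M} (hx : x ≠ 0) :
    y ∈ span (End R M) {x} ↔ ∀ s : R, s • x = 0 → s • y = 0 := by
  constructor
  · rintro hy s hs
    obtain ⟨d, rfl⟩ := mem_span_singleton.1 hy
    rw [End.smul_def, ← d.map_smul, hs, map_zero]
  · intro h
    set φ := LinearMap.toSpanSingleton R M x
    have hle : LinearMap.ker φ ≤ LinearMap.ker (LinearMap.toSpanSingleton R M y) := h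
    let e := φ.quotKerEquivOfSurjective (IsSimpleModule.toSpanSingleton_surjective R hx)
    refine mem_span_singleton.2 ⟨(LinearMap.ker φ).liftQ _ hle ∘ₗ e.symm.toLinearMap, ?_⟩
    have : e.symm x = (LinearMap.ker φ).mkQ 1 := by
      rw [LinearEquiv.symm_apply_eq]
      simp [e, φ]
    simp [End.smul_def, this]

theorem IsNonzeroFiniteRank.exists_isRankOne [IsSimpleModule R M] {r : R}
    (hr : IsNonzeroFiniteRank M r) : ∃ b : R, IsRankOne M b := by
  classical
  induction hn : finrank (End R M) (smulRangeSpan M r)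
    using Nat.strong_induction_on generalizing r with
  | _ n ih =>
  obtain ⟨⟨u, hu⟩, hfg⟩ := hr
  by_cases hone : ∀ m : M, r • m ∈ span (End R M) {r • u}
  · exact ⟨r, u, hu, hone⟩
  push Not at hone
  obtain ⟨v, hv⟩ := hone
  obtain ⟨s, hsu, hsv⟩ : ∃ s : R, s • r • u = 0 ∧ s • r • v ≠ 0 := by
    simpa using mt (mem_span_singleton_end_iff hu).2 hv
  have : FiniteDimensional (End R M) (smulRangeSpan M r) := Module.Finite.iff_fg.2 hfg
  have hlt := finrank_map_lt_of_mem_ker (DistribSMul.toLinearMap (End R M) M s)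
    (smul_mem_smulRangeSpan r u) hu hsu
  rw [map_smulRangeSpan, hn] at hlt
  have hsr : IsNonzeroFiniteRank M (s * r) :=
    ⟨⟨v, by rwa [mul_smul]⟩, map_smulRangeSpan (M := M) s r ▸ hfg.map _⟩
  exact ih _ hlt hsr rfl

theorem IsRankOne.exists_mul_smul_eq [IsSimpleModule R M] {b : R} (hb : IsRankOne M b) {t : R}
    (ht : ∃ n : M, (t * b) • n ≠ 0) : ∃ t' : R, ∀ m : M, (t' * (t * b)) • m = b • m := by
  obtain ⟨u, hu, hspan⟩ := hb
  obtain ⟨n, hn⟩ := ht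
  have htu : t • b • u ≠ 0 := fun h =>
    hn (by rw [mul_smul]; exact (mem_span_singleton_end_iff hu).1 (hspan n) t h)
  obtain ⟨t', ht'⟩ := IsSimpleModule.toSpanSingleton_surjective R htu (b • u)
  refine ⟨t', fun m => ?_⟩
  have := (mem_span_singleton_end_iff hu).1 (hspan m) (t' * t - 1)
    (by simpa [sub_smul, mul_smul, sub_eq_zero] using ht')
  rwa [sub_smul, one_smul, sub_eq_zero, mul_smul, ← mul_smul t, ← mul_smul] at this

end FiniteRank

section Quotient

variable {R S M : Type*} [Ring R] [Ring S] [AddCommGroup M] [Module R M] [Module S M]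
  [IsSimpleModule R M] [FaithfulSMul S M] {π : R →+* S} (hπ : Function.Surjective π)
  (hπM : ∀ (r : R) (m : M), π r • m = r • m)
include hπ hπM

theorem exists_isRankOne_of_isAtom {L : Submodule S S} (hL : IsAtom L) :
    ∃ r : R, IsRankOne M r := by
  obtain ⟨a, haL, ha0⟩ := (Submodule.ne_bot_iff L).1 hL.1
  obtain ⟨m₁, hm₁⟩ := exists_smul_ne_zero_of_ne_zero (M := M) ha0
  obtain ⟨r, rfl⟩ := hπ a
  refine ⟨r, m₁, hπM r m₁ ▸ hm₁, fun m => (mem_span_singleton_end_iff (hπM r m₁ ▸ hm₁)).2 ?_⟩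
  intro s hs
  have hsr : π s * π r = 0 := eq_zero_of_mem_of_smul_eq_zero hL haL hm₁ (L.smul_mem (π s) haL)
    (by rw [mul_smul, hπM, hπM, hs])
  rw [← hπM r, ← hπM s, ← mul_smul, hsr, zero_smul]

theorem hasMinimalLeftIdeal_of_isRankOne {b : R} (hb : IsRankOne M b) : HasMinimalLeftIdeal S := by
  have hb0 : π b ≠ 0 := by
    obtain ⟨u, hu, -⟩ := hb
    exact fun h0 => hu (by rw [← hπM, h0, zero_smul])
  refine ⟨span S {π b}, isAtom_span_singleton_of_forall_exists_mul_eq hb0 fun t ht => ?_⟩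
  obtain ⟨t, rfl⟩ := hπ t
  obtain ⟨n, hn⟩ := exists_smul_ne_zero_of_ne_zero (M := M) ht
  obtain ⟨t', ht'⟩ := hb.exists_mul_smul_eq (t := t) ⟨n, by rwa [← hπM, map_mul]⟩
  exact ⟨π t', eq_of_smul_eq_smul fun m => by rw [← map_mul, ← map_mul, hπM, hπM, ht']⟩

end Quotient

theorem IsGCRRing.exists_isRankOne {R : Type u} [Ring R] (hR : IsGCRRing R) (M : Type u)
    [AddCommGroup M] [Module R M] [IsSimpleModule R M] : ∃ r : R, IsRankOne M r := by
  let ρ := Module.toAddMonoidEnd R M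
  -- the annihilator of `M`, as the kernel of the action `R →+* AddMonoid.End M`
  let P : TwoSidedIdeal R := ⟨RingCon.ker ρ⟩
  let _ : Module P.ringCon.Quotient M := Module.compHom M (RingCon.kerLift ρ)
  have hπM : ∀ (r : R) (m : M), P.ringCon.mk' r • m = r • m := fun _ _ => rfl
  have hsimple := (isSimpleModule_iff_of_surjective_s5 _ P.ringCon.mk'_surjective hπM).1 ‹_›
  have hfaithful : FaithfulSMul P.ringCon.Quotient M :=
    ⟨fun h => RingCon.kerLift_injective ρ (AddMonoidHom.ext h)⟩
  obtain ⟨L, hL⟩ := hR P ⟨M, _, _, hsimple, hfaithful⟩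
  exact exists_isRankOne_of_isAtom P.ringCon.mk'_surjective hπM hL

theorem hasMinimalLeftIdeal_of_surjective {R S : Type u} [Ring R] [Ring S] {π : R →+* S}
    (hπ : Function.Surjective π) (hS : IsPrimitiveRing S)
    (h : ∀ (M : Type u) [AddCommGroup M] [Module R M], IsSimpleModule R M →
      ∃ r : R, IsNonzeroFiniteRank M r) :
    HasMinimalLeftIdeal S := by
  obtain ⟨N, _, _, hsimple, _⟩ := hS
  let _ : Module R N := Module.compHom N π
  have hπN : ∀ (r : R) (n : N), π r • n = r • n := fun _ _ => rfl
  have := (isSimpleModule_iff_of_surjective_s5 π hπ hπN).2 hsimple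
  obtain ⟨r, hr⟩ := h N this
  obtain ⟨b, hb⟩ := hr.exists_isRankOne
  exact hasMinimalLeftIdeal_of_isRankOne hπ hπN hb

/-- A ring `R` is GCR if and only if for every simple left `R`-module `M` there exists
`r ∈ R` acting on `M` as a nonzero finite rank operator over the division ring
`D = End_R(M)`; i.e., `r • M ≠ 0` and the `D`-submodule of `M` generated by `r • M` is a
finitely generated `D`-module. -/
theorem isGCRRing_iff_exists_finite_rank (R : Type u) [Ring R] :
    IsGCRRing R ↔
      ∀ (M : Type u) [AddCommGroup M] [Module R M], IsSimpleModule R M →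
        ∃ r : R, (∃ m : M, r • m ≠ 0) ∧
          (Submodule.span (Module.End R M) (Set.range fun m : M => r • m)).FG := by
  refine ⟨fun hR M _ _ _ => ?_, fun h P hP => hasMinimalLeftIdeal_of_surjective
    P.ringCon.mk'_surjective hP h⟩
  obtain ⟨r, hr⟩ := hR.exists_isRankOne M
  exact ⟨r, hr.isNonzeroFiniteRank⟩
end

section
/- Let k be an algebraically closed field and let D be a division ring which is a k-algebra whose dimension as a k-vector space is strictly less than the cardinality of k. Then D = k, i.e., the structure map k → D is surjective. -/
/-!
An element `x` of `D` transcendental over `k` lies in a subfield `K` of `D` (its double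
centralizer, commutative because `x` commutes with itself), in which the elements `(x - a)⁻¹`,
`a : k`, are `k`-linearly independent; so `dim_k D ≥ #k`. Hence `D` is integral over `k`, and an
algebraically closed field has no proper integral extensions.
-/

universe u v

open Cardinal

theorem Subalgebra.isField_centralizer_centralizer {R D : Type*} [CommRing R] [DivisionRing D]
    [Algebra R D] {s : Set D} (hs : ∀ a ∈ s, ∀ b ∈ s, a * b = b * a) :
    IsField (centralizer R s.centralizer) where
  exists_pair_ne := ⟨0, 1, zero_ne_one⟩
  mul_comm a b := Subtype.ext <| Set.centralizer_centralizer_comm_of_comm hs _ a.2 _ b.2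
  mul_inv_cancel {a} ha := ⟨⟨a⁻¹, Set.inv_mem_centralizer₀ a.2⟩,
    Subtype.ext <| mul_inv_cancel₀ fun h ↦ ha (Subtype.ext h)⟩

theorem Transcendental.lift_cardinalMk_le_lift_rank {k : Type u} {D : Type v} [Field k]
    [DivisionRing D] [Algebra k D] {x : D} (hx : Transcendental k x) :
    lift.{v} #k ≤ lift.{u} (Module.rank k D) := by
  let K := Subalgebra.centralizer k (Set.centralizer {x})
  let : Field K := (Subalgebra.isField_centralizer_centralizer (by simp)).toField
  have hxK : x ∈ K := Set.subset_centralizer_centralizer rfl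
  have hK : Transcendental k (⟨x, hxK⟩ : K) :=
    Subalgebra.transcendental_iff_transcendental_val.2 hx
  calc lift.{v} #k ≤ lift.{u} (Module.rank k K) :=
        hK.linearIndependent_sub_inv.cardinal_lift_le_rank
    _ ≤ lift.{u} (Module.rank k D) := lift_le.2 (Submodule.rank_le (Subalgebra.toSubmodule K))

theorem Algebra.isIntegral_of_lift_rank_lt_lift_cardinalMk {k : Type u} {D : Type v} [Field k]
    [DivisionRing D] [Algebra k D] (h : lift.{u} (Module.rank k D) < lift.{v} #k) :
    Algebra.IsIntegral k D :=
  ⟨fun _ ↦ by_contra fun hx ↦ (h.trans_le (Transcendental.lift_cardinalMk_le_lift_rank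
    fun halg ↦ hx halg.isIntegral)).false⟩

/-- Let `k` be an algebraically closed field and `D` a division ring which is a `k`-algebra
whose dimension as a `k`-vector space is strictly less than the cardinality of `k`.
Then `D = k`, i.e., the structure map `k → D` is surjective. -/
theorem divisionRing_eq_of_rank_lt_card (k : Type u) (D : Type v) [Field k] [IsAlgClosed k]
    [DivisionRing D] [Algebra k D]
    (h : Cardinal.lift.{u} (Module.rank k D) < Cardinal.lift.{v} (Cardinal.mk k)) :
    Function.Surjective (algebraMap k D) :=
  have := Algebra.isIntegral_of_lift_rank_lt_lift_cardinalMk h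
  IsAlgClosed.algebraMap_bijective_of_isIntegral.2
end

section
/- Let R be a ring, I a two-sided ideal of R, and M a simple left R-module such that I•M ≠ 0 (i.e., the submodule I • M of M is nonzero). Then: (i) for every nonzero m ∈ M, the submodule I • (span_R {m}) equals all of M (so M is a simple I-module); and (ii) every additive group endomorphism Φ of M satisfying Φ(r•m) = r•Φ(m) for all r ∈ I and m ∈ M is R-linear, i.e., satisfies Φ(r•m) = r•Φ(m) for all r ∈ R and m ∈ M. -/
/-- For a two-sided ideal `I` of `R` and a submodule `N` of an `R`-module `M`, `I • N` is
the `R`-submodule of `M` generated by the products `r • n` with `r ∈ I` and `n ∈ N`. -/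
def TwoSidedIdeal.smulSubmodule {R : Type u} [Ring R] (I : TwoSidedIdeal R)
    {M : Type v} [AddCommGroup M] [Module R M] (N : Submodule R M) : Submodule R M :=
  Submodule.span R {x : M | ∃ r ∈ I, ∃ n ∈ N, r • n = x}

/-- Let `R` be a ring, `I` a two-sided ideal of `R`, and `M` a simple left `R`-module with
`I • M ≠ 0`.  Then (i) for every nonzero `m ∈ M` we have `I • (R·m) = M` (so `M` is a
simple `I`-module), and (ii) every additive endomorphism of `M` commuting with the action
of all elements of `I` is `R`-linear. -/
theorem simple_module_ideal_action (R : Type u) [Ring R] (I : TwoSidedIdeal R)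
    (M : Type v) [AddCommGroup M] [Module R M] (hM : IsSimpleModule R M)
    (hIM : I.smulSubmodule (⊤ : Submodule R M) ≠ ⊥) :
    (∀ m : M, m ≠ 0 → I.smulSubmodule (Submodule.span R {m}) = ⊤) ∧
    (∀ Φ : M →+ M, (∀ r ∈ I, ∀ m : M, Φ (r • m) = r • Φ m) →
      ∀ (r : R) (m : M), Φ (r • m) = r • Φ m) := by
  have htop : ∀ (N : Submodule R M), N ≠ ⊥ → N = ⊤ := fun N h =>
    (eq_bot_or_eq_top N).resolve_left h
  -- For every nonzero m there is r ∈ I with r • m ≠ 0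
  have hann : ∀ m : M, m ≠ 0 → ∃ r ∈ I, r • m ≠ 0 := by
    intro m hm
    by_contra h
    push_neg at h
    let A : Submodule R M :=
      { carrier := {x | ∀ r ∈ I, r • x = 0}
        add_mem' := fun hx hy r hr => by rw [smul_add, hx r hr, hy r hr, add_zero]
        zero_mem' := fun r _ => smul_zero r
        smul_mem' := fun c x hx r hr => by
          rw [smul_smul]; exact hx (r * c) (I.mul_mem_right _ _ hr) }
    have hmA : m ∈ A := h
    have : A = ⊤ := htop A (fun hbot => hm (by simpa [hbot] using hmA))
    apply hIM
    rw [eq_bot_iff, TwoSidedIdeal.smulSubmodule, Submodule.span_le]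
    rintro x ⟨r, hr, n, -, rfl⟩
    have hnA : n ∈ A := this ▸ Submodule.mem_top
    simp [hnA r hr]
  constructor
  · intro m hm
    obtain ⟨r, hr, hrm⟩ := hann m hm
    apply htop
    intro hbot
    apply hrm
    have : r • m ∈ I.smulSubmodule (Submodule.span R {m}) :=
      Submodule.subset_span ⟨r, hr, m, Submodule.mem_span_singleton_self m, rfl⟩
    simpa [hbot] using this
  · intro Φ hΦ r m
    have hMtop : I.smulSubmodule (⊤ : Submodule R M) = ⊤ := htop _ hIM
    have hmem : m ∈ I.smulSubmodule (⊤ : Submodule R M) := by rw [hMtop]; trivial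
    revert r
    refine Submodule.span_induction (p := fun x _ => ∀ t : R, Φ (t • x) = t • Φ x)
      ?_ ?_ ?_ ?_ hmem
    · rintro x ⟨a, ha, n, -, rfl⟩ t
      rw [smul_smul, hΦ _ (I.mul_mem_left t a ha), hΦ _ ha, smul_smul]
    · intro t; simp
    · intro x y _ _ hx hy t
      rw [smul_add, map_add, hx t, hy t, map_add, smul_add]
    · intro a x _ hx t
      rw [smul_smul, hx (t * a), ← smul_smul, hx a]
end

section
/- Let R be a ring, e ∈ R an idempotent (e·e = e), and V a simple left R-module such that e•V ≠ 0 (there exists v ∈ V with e•v ≠ 0). Then the set eV = {v ∈ V : e•v = v} is a simple module over the corner eRe; concretely, eV ≠ {0} and for every v ∈ eV with v ≠ 0 and every w ∈ eV there exists r ∈ R with (e·r·e)•v = w. -/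
/-- Let `R` be a ring, `e ∈ R` an idempotent, and `V` a simple left `R`-module with
`e • V ≠ 0`.  Then `eV = {v : V | e • v = v}` is a simple module over the corner ring
`eRe`: it is nonzero, and for every nonzero `v ∈ eV` and every `w ∈ eV` there exists
`r ∈ R` with `(e * r * e) • v = w`. -/
theorem corner_simple_module (R : Type u) [Ring R] (e : R) (he : e * e = e)
    (V : Type v) [AddCommGroup V] [Module R V] (hV : IsSimpleModule R V)
    (hne : ∃ v : V, e • v ≠ 0) :
    (∃ v : V, e • v = v ∧ v ≠ 0) ∧
    (∀ v : V, e • v = v → v ≠ 0 → ∀ w : V, e • w = w →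
      ∃ r : R, (e * r * e) • v = w) := by
  constructor
  · obtain ⟨v, hv⟩ := hne
    exact ⟨e • v, by rw [← mul_smul, he], hv⟩
  · intro v hv hv0 w hw
    have hspan : Submodule.span R {v} = ⊤ :=
      (eq_bot_or_eq_top (Submodule.span R {v})).resolve_left (by
        intro h
        exact hv0 (by simpa [h] using Submodule.mem_span_singleton_self (R := R) v))
    have : w ∈ Submodule.span R {v} := by rw [hspan]; exact Submodule.mem_top (R := R)
    obtain ⟨r, hr⟩ := Submodule.mem_span_singleton.mp this
    refine ⟨r, ?_⟩
    rw [mul_smul, mul_smul, hv, hr, hw]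
end

section
/- Let R be a ring, e ∈ R an idempotent (e·e = e), and V a simple left R-module with e•V ≠ 0. Then the map restricting an R-module endomorphism Φ of V to the additive subgroup eV = {v ∈ V : e•v = v} is a bijection from End_R(V) onto the set of additive group endomorphisms ψ of eV satisfying ψ((e·r·e)•v) = (e·r·e)•ψ(v) for all r ∈ R and v ∈ eV. -/
/-- For an idempotent `e` of `R` and an `R`-module `V`, the additive subgroup
`eV = {v : V | e • v = v}` of `V`. -/
def cornerSubgroup {R : Type u} [Ring R] (e : R) (V : Type v) [AddCommGroup V]
    [Module R V] : AddSubgroup V where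
  carrier := {v : V | e • v = v}
  zero_mem' := by simp
  add_mem' := by
    intro a b ha hb
    simp only [Set.mem_setOf_eq] at *
    rw [smul_add, ha, hb]
  neg_mem' := by
    intro a ha
    simp only [Set.mem_setOf_eq] at *
    rw [smul_neg, ha]

theorem smul_mem_cornerSubgroup {R : Type u} [Ring R] {e : R} (he : e * e = e)
    {V : Type v} [AddCommGroup V] [Module R V] (r : R) (v : V) :
    (e * r * e) • v ∈ cornerSubgroup e V := by
  show e • ((e * r * e) • v) = (e * r * e) • v
  rw [← mul_smul, ← mul_assoc, ← mul_assoc, he]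

/-- Let `R` be a ring, `e ∈ R` an idempotent, and `V` a simple left `R`-module with
`e • V ≠ 0`.  Then restriction to `eV = {v : V | e • v = v}` is a bijection from
`End_R(V)` onto the set of additive endomorphisms `ψ` of `eV` satisfying
`ψ((e*r*e) • v) = (e*r*e) • ψ(v)` for all `r ∈ R` and `v ∈ eV`. -/
theorem corner_restriction_bijective (R : Type u) [Ring R] (e : R) (he : e * e = e)
    (V : Type v) [AddCommGroup V] [Module R V] (hV : IsSimpleModule R V)
    (hne : ∃ v : V, e • v ≠ 0) :
    ∃ F : (V →ₗ[R] V) ≃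
        {ψ : cornerSubgroup e V →+ cornerSubgroup e V //
          ∀ (r : R) (v : cornerSubgroup e V),
            ψ ⟨(e * r * e) • (v : V), smul_mem_cornerSubgroup he r (v : V)⟩ =
              ⟨(e * r * e) • ((ψ v : V)), smul_mem_cornerSubgroup he r (ψ v : V)⟩},
      ∀ (Φ : V →ₗ[R] V) (v : cornerSubgroup e V), ((F Φ).1 v : V) = Φ (v : V) := by
  classical
  haveI := hV
  have hmem : ∀ (Φ : V →ₗ[R] V) (v : V), v ∈ cornerSubgroup e V →
      Φ v ∈ cornerSubgroup e V := by
    intro Φ v hv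
    show e • Φ v = Φ v
    have hv' : e • v = v := hv
    rw [← map_smul, hv']
  have hesmul : ∀ v : V, e • v ∈ cornerSubgroup e V := by
    intro v
    show e • (e • v) = e • v
    rw [← mul_smul, he]
  let res : (V →ₗ[R] V) → {ψ : cornerSubgroup e V →+ cornerSubgroup e V //
      ∀ (r : R) (v : cornerSubgroup e V),
        ψ ⟨(e * r * e) • (v : V), smul_mem_cornerSubgroup he r (v : V)⟩ =
          ⟨(e * r * e) • ((ψ v : V)), smul_mem_cornerSubgroup he r (ψ v : V)⟩} :=
    fun Φ => ⟨{ toFun := fun v => ⟨Φ v, hmem Φ v v.2⟩,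
                map_zero' := by ext; simp,
                map_add' := by intro a b; ext; simp },
      by intro r v; ext; simp⟩
  have hinj : Function.Injective res := by
    intro Φ Ψ h
    have h' : ∀ v : V, v ∈ cornerSubgroup e V → Φ v = Ψ v := by
      intro v hv
      have := congrArg (fun ψ => ((ψ.1 ⟨v, hv⟩ : cornerSubgroup e V) : V)) h
      simpa [res] using this
    have hloc : LinearMap.eqLocus Φ Ψ = ⊤ := by
      rcases eq_bot_or_eq_top (LinearMap.eqLocus Φ Ψ) with hb | ht
      · exfalso
        obtain ⟨w, hw⟩ := hne
        have hm : e • w ∈ LinearMap.eqLocus Φ Ψ := h' _ (hesmul w)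
        rw [hb] at hm
        exact hw (by simpa using hm)
      · exact ht
    ext v
    have hv : v ∈ LinearMap.eqLocus Φ Ψ := hloc ▸ Submodule.mem_top
    exact hv
  have hsurj : Function.Surjective res := by
    rintro ⟨ψ, hψ⟩
    obtain ⟨v0, hv0⟩ := hne
    set u : V := e • v0 with hu
    have hu_mem : u ∈ cornerSubgroup e V := hesmul v0
    have hu_mem' : e • u = u := hu_mem
    have hu_ne : u ≠ 0 := hv0
    have hspan : Submodule.span R {u} = ⊤ := by
      rcases eq_bot_or_eq_top (Submodule.span R {u}) with hb | ht
      · exact absurd (Submodule.span_eq_bot.mp hb u rfl) hu_ne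
      · exact ht
    set f : R →ₗ[R] V := LinearMap.toSpanSingleton R V u with hf
    have hf_surj : Function.Surjective f := by
      rw [← LinearMap.range_eq_top, hf, ← LinearMap.span_singleton_eq_range]
      exact hspan
    set w : cornerSubgroup e V := ψ ⟨u, hu_mem⟩ with hw
    have hw_mem : e • (w : V) = (w : V) := w.2
    set h : R →ₗ[R] V := LinearMap.toSpanSingleton R V (w : V) with hh
    set N : Submodule R V :=
      { carrier := {x : V | ∀ s : R, (e * s) • x = 0}
        zero_mem' := by intro s; simp
        add_mem' := by
          intro a b ha hb s
          rw [smul_add, ha s, hb s, add_zero]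
        smul_mem' := by
          intro t x hx s
          rw [← mul_smul, mul_assoc, mul_smul, ← mul_smul]
          exact hx (s * t) } with hN
    have hN_bot : N = ⊥ := by
      rcases eq_bot_or_eq_top N with hb | ht
      · exact hb
      · exfalso
        have humem : u ∈ N := ht ▸ Submodule.mem_top
        have h1 : (e * 1) • u = 0 := humem 1
        rw [mul_one, hu_mem'] at h1
        exact hu_ne h1
    have hker : LinearMap.ker f ≤ LinearMap.ker h := by
      intro r hr
      have hru : r • u = 0 := by
        simpa [hf, LinearMap.toSpanSingleton_apply] using hr
      have hmemN : r • (w : V) ∈ N := by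
        intro s
        have h1 : (e * (s * r) * e) • u = (0 : V) := by
          rw [mul_smul, hu_mem', mul_smul, mul_smul, hru, smul_zero, smul_zero]
        have h2 := hψ (s * r) ⟨u, hu_mem⟩
        have h3 : (⟨(e * (s * r) * e) • u, smul_mem_cornerSubgroup he (s * r) u⟩ :
            cornerSubgroup e V) = 0 := by
          apply Subtype.ext
          exact h1
        rw [h3, map_zero] at h2
        have h4 : (e * (s * r) * e) • (w : V) = 0 := by
          have := congrArg (fun x : cornerSubgroup e V => (x : V)) h2.symm
          simpa [hw] using this
        calc (e * s) • r • (w : V) = (e * (s * r)) • (w : V) := by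
              simp only [mul_smul]
          _ = (e * (s * r)) • (e • (w : V)) := by rw [hw_mem]
          _ = (e * (s * r) * e) • (w : V) := by rw [← mul_smul]
          _ = 0 := h4
      rw [hN_bot] at hmemN
      have : r • (w : V) = 0 := hmemN
      simpa [hh, LinearMap.toSpanSingleton_apply] using this
    set E := f.quotKerEquivOfSurjective hf_surj with hE
    set Φ : V →ₗ[R] V :=
      (Submodule.liftQ (LinearMap.ker f) h hker).comp E.symm.toLinearMap with hΦ
    have hΦf : ∀ r : R, Φ (f r) = h r := by
      intro r
      have hEq : E ((LinearMap.ker f).mkQ r) = f r := by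
        simp [hE, LinearMap.quotKerEquivOfSurjective, LinearMap.quotKerEquivRange,
          Submodule.mkQ_apply]
      have hsymm : E.symm (f r) = (LinearMap.ker f).mkQ r := by
        rw [← hEq, LinearEquiv.symm_apply_apply]
      simp [hΦ, hsymm, Submodule.mkQ_apply, Submodule.liftQ_apply]
    refine ⟨Φ, ?_⟩
    apply Subtype.ext
    ext v
    obtain ⟨r, hr⟩ := hf_surj (v : V)
    have hv_mem : e • (v : V) = (v : V) := v.2
    have hr' : r • u = (v : V) := by
      simpa [hf, LinearMap.toSpanSingleton_apply] using hr
    have hvu : (e * r * e) • u = (v : V) := by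
      rw [mul_smul, hu_mem', mul_smul, hr', hv_mem]
    have hveq : v = (⟨(e * r * e) • u, smul_mem_cornerSubgroup he r u⟩ :
        cornerSubgroup e V) := by
      apply Subtype.ext
      exact hvu.symm
    have hΦv : Φ (v : V) = (e * r * e) • (w : V) := by
      have : f (e * r * e) = (v : V) := by
        simpa [hf, LinearMap.toSpanSingleton_apply] using hvu
      rw [← this, hΦf]
      simp [hh, LinearMap.toSpanSingleton_apply]
    have hψv : (ψ v : V) = (e * r * e) • (w : V) := by
      rw [hveq]
      have := hψ r ⟨u, hu_mem⟩
      rw [this]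
    show ((res Φ).1 v : V) = (ψ v : V)
    rw [hψv]
    simpa [res] using hΦv
  exact ⟨Equiv.ofBijective res ⟨hinj, hsurj⟩, fun Φ v => rfl⟩
end

section
/- Let R be a ring, e ∈ R an idempotent (e·e = e), and V a left R-module such that V is generated as an R-module by the set e•V (i.e., span_R {e•v : v ∈ V} = V) and such that eV = {v ∈ V : e•v = v} is a simple eRe-module (eV ≠ {0}, and for every nonzero v ∈ eV and every w ∈ eV there exists r ∈ R with (e·r·e)•v = w). Then N = {v ∈ V : ∀ r ∈ R, (e·r)•v = 0} is an R-submodule of V which is proper, contains every proper R-submodule of V (so N is the unique maximal submodule), and satisfies e•N = 0; consequently the quotient V/N is a simple R-module. -/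
/-- For an idempotent `e` of `R` and an `R`-module `V`, the submodule
`N = {v : V | ∀ r : R, (e * r) • v = 0}`. -/
def cornerRadical {R : Type u} [Ring R] (e : R) (V : Type v) [AddCommGroup V]
    [Module R V] : Submodule R V where
  carrier := {v : V | ∀ r : R, (e * r) • v = 0}
  zero_mem' := by intro r; simp
  add_mem' := by
    intro a b ha hb r
    rw [smul_add, ha r, hb r, add_zero]
  smul_mem' := by
    intro c v hv r
    rw [← mul_smul, mul_assoc, mul_smul]
    have := hv (r * c)
    rw [mul_smul] at this
    exact this

/-- Let `R` be a ring, `e ∈ R` an idempotent, and `V` a left `R`-module generated by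
`e • V` and such that `eV = {v : V | e • v = v}` is a simple `eRe`-module.  Then
`N = {v : V | ∀ r : R, (e * r) • v = 0}` is a proper submodule containing every proper
submodule of `V` (so it is the unique maximal submodule), `e • N = 0`, and `V/N` is a
simple `R`-module. -/
theorem corner_radical_unique_maximal (R : Type u) [Ring R] (e : R) (he : e * e = e)
    (V : Type v) [AddCommGroup V] [Module R V]
    (hgen : Submodule.span R {x : V | ∃ v : V, e • v = x} = ⊤)
    (hne : ∃ v : V, e • v = v ∧ v ≠ 0)
    (hsimp : ∀ v : V, e • v = v → v ≠ 0 → ∀ w : V, e • w = w →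
      ∃ r : R, (e * r * e) • v = w) :
    cornerRadical e V ≠ ⊤ ∧
    (∀ W : Submodule R V, W ≠ ⊤ → W ≤ cornerRadical e V) ∧
    (∀ v ∈ cornerRadical e V, e • v = 0) ∧
    IsSimpleModule R (V ⧸ cornerRadical e V) := by
  have hNtop : cornerRadical e V ≠ ⊤ := by
    obtain ⟨v, hev, hv0⟩ := hne
    intro h
    have hvN : v ∈ cornerRadical e V := h ▸ Submodule.mem_top
    have := hvN e
    rw [he, hev] at this
    exact hv0 this
  have hle : ∀ W : Submodule R V, W ≠ ⊤ → W ≤ cornerRadical e V := by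
    intro W hW
    by_contra hc
    obtain ⟨w, hwW, hwN⟩ := Set.not_subset.mp hc
    have hwN' : ∃ r : R, (e * r) • w ≠ 0 := by
      by_contra h
      push_neg at h
      exact hwN h
    obtain ⟨r, hr⟩ := hwN'
    set u : V := (e * r) • w with hu
    have huW : u ∈ W := Submodule.smul_mem W _ hwW
    have heu : e • u = u := by
      rw [hu, ← mul_smul, ← mul_assoc, he]
    have hWeV : ∀ x : V, e • x = x → x ∈ W := by
      intro x hx
      obtain ⟨s, hs⟩ := hsimp u heu hr x hx
      rw [← hs]
      exact Submodule.smul_mem W _ huW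
    apply hW
    rw [← top_le_iff, ← hgen, Submodule.span_le]
    rintro x ⟨v, rfl⟩
    exact hWeV _ (by rw [← mul_smul, he])
  have heN : ∀ v ∈ cornerRadical e V, e • v = 0 := by
    intro v hv
    have := hv e
    rwa [he] at this
  refine ⟨hNtop, hle, heN, ?_⟩
  rw [isSimpleModule_iff_isCoatom]
  exact ⟨hNtop, fun W hW => by_contra fun h => (not_le_of_gt hW) (hle W h)⟩
end

section
/- Let k be an algebraically closed field and A an abelian group whose cardinality is strictly less than the cardinality of k. Then every simple module over the group algebra of A over k is one-dimensional as a k-vector space. -/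
universe u v w

open Cardinal

/-- Auxiliary: a field extension of an algebraically closed field `k` of `k`-rank
less than the cardinality of `k` is trivial, i.e. has `k`-rank one. -/
theorem aux_rank_one {k : Type u} [Field k] [IsAlgClosed k] {K : Type v} [Field K]
    [Algebra k K]
    (h : Cardinal.lift.{u} (Module.rank k K) < Cardinal.lift.{v} (Cardinal.mk k)) :
    Module.rank k K = 1 := by
  have halg : Algebra.IsAlgebraic k K := by
    constructor
    intro x
    by_contra hx
    have htr : Transcendental k x := hx
    have hli := htr.linearIndependent_sub_inv
    have h1 : Cardinal.lift.{v} (Cardinal.mk k) ≤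
        Cardinal.lift.{u} (Module.rank k K) := hli.cardinal_lift_le_rank
    exact absurd (h1.trans_lt h) (lt_irrefl _)
  have hbij : Function.Bijective (algebraMap k K) :=
    ⟨(algebraMap k K).injective, IsAlgClosed.algebraMap_bijective_of_isIntegral.2⟩
  let alge : k ≃ₐ[k] K := AlgEquiv.ofBijective (Algebra.ofId k K) hbij
  have h1 := alge.symm.toLinearEquiv.lift_rank_eq
  rw [Module.rank_self, Cardinal.lift_one] at h1
  simpa using h1

/-- Let `k` be an algebraically closed field and `A` an abelian group of cardinality
strictly less than that of `k`.  Then every simple module over the group algebra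
`MonoidAlgebra k A` is one-dimensional as a `k`-vector space. -/
theorem simple_module_rank_one_of_abelian (k : Type u) [Field k] [IsAlgClosed k]
    (A : Type v) [CommGroup A]
    (hcard : Cardinal.lift.{u} (Cardinal.mk A) < Cardinal.lift.{v} (Cardinal.mk k))
    (V : Type w) [AddCommGroup V] [Module k V] [Module (MonoidAlgebra k A) V]
    [IsScalarTower k (MonoidAlgebra k A) V]
    (hV : IsSimpleModule (MonoidAlgebra k A) V) :
    Module.rank k V = 1 := by
  obtain ⟨I, hImax, ⟨e⟩⟩ := isSimpleModule_iff_quot_maximal.mp hV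
  haveI := hImax
  -- the quotient is spanned over `k` by the images of the group elements
  set v : A → MonoidAlgebra k A ⧸ I :=
    fun a => Ideal.Quotient.mkₐ k I (MonoidAlgebra.of k A a) with hv
  have hspan : Submodule.span k (Set.range v) = ⊤ := by
    have hR : Submodule.span k (Set.range (MonoidAlgebra.of k A)) = ⊤ := by
      rw [eq_top_iff]
      intro f _
      refine Submodule.span_mono ?_ (MonoidAlgebra.mem_span_support f)
      exact Set.image_subset_range _ _
    have : Set.range v = (Ideal.Quotient.mkₐ k I).toLinearMap ''
        Set.range (MonoidAlgebra.of k A) := by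
      rw [← Set.range_comp]; rfl
    rw [this, Submodule.span_image, hR, Submodule.map_top,
      LinearMap.range_eq_top.2
        (show Function.Surjective (Ideal.Quotient.mkₐ k I).toLinearMap from
          Ideal.Quotient.mkₐ_surjective k I)]
  have hle : Module.rank k (MonoidAlgebra k A ⧸ I) ≤
      Cardinal.lift.{u} (Cardinal.mk A) := by
    rw [← rank_top k, ← hspan]
    refine (rank_span_le _).trans ?_
    have h2 := Cardinal.mk_range_le_lift (f := v)
    rwa [Cardinal.lift_id', Cardinal.lift_umax.{v, u}] at h2
  -- the quotient is a field extension of `k` of small rank, hence trivial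
  letI : Field (MonoidAlgebra k A ⧸ I) := Ideal.Quotient.field I
  have hrank1 : Module.rank k (MonoidAlgebra k A ⧸ I) = 1 := by
    refine aux_rank_one (k := k) (K := MonoidAlgebra k A ⧸ I) ?_
    calc Cardinal.lift.{u} (Module.rank k (MonoidAlgebra k A ⧸ I))
        ≤ Cardinal.lift.{u} (Cardinal.lift.{u} (Cardinal.mk A)) :=
          Cardinal.lift_le.mpr hle
      _ < Cardinal.lift.{max u v} (Cardinal.mk k) := by
          have h5 := Cardinal.lift_lt.{max u v, max u v}.mpr hcard
          rw [Cardinal.lift_lift, Cardinal.lift_lift] at h5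
          rw [Cardinal.lift_lift]
          rwa [Cardinal.lift_umax.{v, u}] at h5
  have hVK := (e.restrictScalars k).lift_rank_eq
  rw [hrank1, Cardinal.lift_one] at hVK
  simpa using hVK
end

section
/- (Clifford's theorem) Let k be a field, G a group, and H a normal subgroup of G of finite index n. Let V be a simple module over the group algebra of G over k, and regard V as a module over the group algebra of H over k by restriction along the inclusion H → G. Then there exist m ≤ n simple modules W_1, …, W_m over the group algebra of H and an injective homomorphism of modules over the group algebra of H from V into the direct sum W_1 ⊕ ⋯ ⊕ W_m; in particular, V is a semisimple module over the group algebra of H. -/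
/-!
Since `V` is cyclic over `k[G]` and `k[G] = ⊕_{t} k[H] t` over coset representatives `t`, `V` is
finitely generated over `k[H]`, so it has a maximal `k[H]`-submodule `U`. Normality of `H` makes
each translate `g U` a maximal `k[H]`-submodule depending only on the coset `gH`. The intersection
of all translates is `G`-stable and proper, hence zero by simplicity of `V`; so `V` embeds into
the product of the `[G : H]` simple quotients `V ⧸ g U`, and is semisimple as a submodule of a
finite product of simple modules.
-/

open MonoidAlgebra Submodule

namespace MonoidAlgebra

variable {k G : Type*} [Semiring k] [Group G] {H : Subgroup G}

variable (k H) [H.Normal] in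
noncomputable abbrev conjNormal (g : G) : MonoidAlgebra k H →+* MonoidAlgebra k H :=
  mapDomainRingHom k (MulAut.conjNormal g).toMonoidHom

variable [H.Normal] in
theorem single_one_mul_mapDomainRingHom_subtype (g : G) (c : MonoidAlgebra k H) :
    single g 1 * mapDomainRingHom k H.subtype c =
      mapDomainRingHom k H.subtype (conjNormal k H g c) * single g 1 := by
  induction c using MonoidAlgebra.induction_linear with
  | zero => simp
  | add c c' hc hc' => simp only [map_add, mul_add, add_mul, hc, hc']
  | single h a =>
    simp only [mapDomainRingHom_apply, mapDomain_single, single_mul_single]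
    simp [mul_assoc]

variable {V : Type*} [AddCommMonoid V] [Module (MonoidAlgebra k G) V]
  [Module (MonoidAlgebra k H) V]
  (hres : ∀ (c : MonoidAlgebra k H) (x : V), c • x = mapDomainRingHom k H.subtype c • x)
include hres

theorem single_subtype_smul (h : H) (a : k) (x : V) :
    single (h : G) a • x = single h a • x := by
  rw [hres, mapDomainRingHom_apply, mapDomain_single, Subgroup.coe_subtype]

theorem single_one_smul_mem_iff (U : Submodule (MonoidAlgebra k H) V) (h : H) {x : V} :
    single (h : G) (1 : k) • x ∈ U ↔ x ∈ U := by
  refine ⟨fun hx => ?_, fun hx => single_subtype_smul hres h 1 x ▸ U.smul_mem _ hx⟩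
  have := U.smul_mem (single h⁻¹ 1) hx
  rwa [← single_subtype_smul hres, ← mul_smul, single_mul_single, ← Subgroup.coe_mul,
    inv_mul_cancel, one_mul, Subgroup.coe_one, ← one_def, one_smul] at this

variable [H.Normal]

theorem single_one_smul_smul (g : G) (c : MonoidAlgebra k H) (x : V) :
    single g (1 : k) • c • x = conjNormal k H g c • single g (1 : k) • x := by
  rw [hres, hres, ← mul_smul, ← mul_smul, single_one_mul_mapDomainRingHom_subtype]

noncomputable def translate (g : G) : V →ₛₗ[conjNormal k H g] V where
  toFun x := single g (1 : k) • x
  map_add' := smul_add _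
  map_smul' := single_one_smul_smul hres g

/-- The translate `g U = {g • x | x ∈ U}`, written as the preimage of `U` under `g⁻¹`. -/
noncomputable def twist (g : G) (U : Submodule (MonoidAlgebra k H) V) :
    Submodule (MonoidAlgebra k H) V :=
  U.comap (translate hres g⁻¹)

theorem mem_twist {g : G} {U : Submodule (MonoidAlgebra k H) V} {x : V} :
    x ∈ twist hres g U ↔ single g⁻¹ (1 : k) • x ∈ U :=
  Iff.rfl

theorem twist_one (U : Submodule (MonoidAlgebra k H) V) : twist hres 1 U = U := by
  ext x
  rw [mem_twist, inv_one, ← one_def, one_smul]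

theorem twist_twist (g g' : G) (U : Submodule (MonoidAlgebra k H) V) :
    twist hres g (twist hres g' U) = twist hres (g * g') U := by
  ext x
  rw [mem_twist, mem_twist, mem_twist, ← mul_smul, single_mul_single, mul_inv_rev, one_mul]

theorem twist_mul_of_mem (g : G) (h : H) (U : Submodule (MonoidAlgebra k H) V) :
    twist hres (g * (h : G)) U = twist hres g U := by
  rw [← twist_twist]
  congr
  ext x
  rw [mem_twist, ← Subgroup.coe_inv, single_one_smul_mem_iff hres]

theorem twist_out_mk (g : G) (U : Submodule (MonoidAlgebra k H) V) :
    twist hres (QuotientGroup.mk g : G ⧸ H).out U = twist hres g U := by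
  obtain ⟨h, hh⟩ := QuotientGroup.mk_out_eq_mul H g
  rw [hh, twist_mul_of_mem]

noncomputable def twistOrderIso (g : G) :
    Submodule (MonoidAlgebra k H) V ≃o Submodule (MonoidAlgebra k H) V :=
  Equiv.toOrderIso
    { toFun := twist hres g
      invFun := twist hres g⁻¹
      left_inv U := by rw [twist_twist, inv_mul_cancel, twist_one]
      right_inv U := by rw [twist_twist, mul_inv_cancel, twist_one] }
    (fun _ _ => comap_mono) (fun _ _ => comap_mono)

theorem isCoatom_twist {U : Submodule (MonoidAlgebra k H) V} (hU : IsCoatom U) (g : G) :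
    IsCoatom (twist hres g U) :=
  (twistOrderIso hres g).isCoatom_iff U |>.mpr hU

noncomputable def twistCore (U : Submodule (MonoidAlgebra k H) V) :
    Submodule (MonoidAlgebra k G) V where
  carrier := (⨅ g, twist hres g U : Submodule (MonoidAlgebra k H) V)
  add_mem' := add_mem
  zero_mem' := zero_mem _
  smul_mem' r x hx := by
    induction r using MonoidAlgebra.induction_linear with
    | zero => rw [zero_smul]; exact zero_mem _
    | add r r' hr hr' => rw [add_smul]; exact add_mem hr hr'
    | single g a =>
      simp only [SetLike.mem_coe, mem_iInf, mem_twist] at hx ⊢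
      intro g'
      have hx' := hx (g'⁻¹ * g)⁻¹
      rw [inv_inv] at hx'
      rw [← mul_smul, single_mul_single, one_mul,
        show single (g'⁻¹ * g) a = single ((1 : H) : G) a * single (g'⁻¹ * g) 1 by
          rw [single_mul_single, Subgroup.coe_one, one_mul, mul_one],
        mul_smul, single_subtype_smul hres]
      exact U.smul_mem _ hx'

theorem smul_mem_span_out_smul (r : MonoidAlgebra k G) (x : V) :
    r • x ∈ span (MonoidAlgebra k H) (Set.range fun c : G ⧸ H => single c.out (1 : k) • x) := by
  induction r using MonoidAlgebra.induction_linear with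
  | zero => rw [zero_smul]; exact zero_mem _
  | add r r' hr hr' => rw [add_smul]; exact add_mem hr hr'
  | single g a =>
    set t := (QuotientGroup.mk g : G ⧸ H).out
    obtain ⟨h, ht⟩ : ∃ h : H, t = g * h := QuotientGroup.mk_out_eq_mul H g
    have hg : g = (MulAut.conjNormal t h⁻¹ : G) * t := by
      rw [MulAut.conjNormal_apply, inv_mul_cancel_right, ht, Subgroup.coe_inv,
        mul_inv_cancel_right]
    rw [hg, ← mul_one a, ← single_mul_single, mul_smul, single_subtype_smul hres]
    exact smul_mem _ _ (subset_span ⟨_, rfl⟩)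

theorem moduleFinite_of_finiteIndex [H.FiniteIndex] [Module.Finite (MonoidAlgebra k G) V] :
    Module.Finite (MonoidAlgebra k H) V := by
  obtain ⟨S, hS⟩ := Module.finite_def.1 ‹Module.Finite (MonoidAlgebra k G) V›
  refine Module.finite_def.2 (fg_def.2 ⟨_, (S.finite_toSet.biUnion fun x _ =>
    Set.finite_range fun c : G ⧸ H => single c.out (1 : k) • x), eq_top_iff.2 fun y _ => ?_⟩)
  obtain ⟨f, -, rfl⟩ := mem_span_finset.1 (hS ▸ mem_top : y ∈ span _ (S : Set V))
  exact sum_mem fun x hx => span_mono (Set.subset_biUnion_of_mem (u := fun x => _) hx)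
    (smul_mem_span_out_smul hres (f x) x)

end MonoidAlgebra

theorem MonoidAlgebra.iInf_twist_eq_bot {k G : Type*} [Ring k] [Group G] {H : Subgroup G}
    [H.Normal] {V : Type*} [AddCommGroup V] [Module (MonoidAlgebra k G) V]
    [Module (MonoidAlgebra k H) V]
    (hres : ∀ (c : MonoidAlgebra k H) (x : V), c • x = mapDomainRingHom k H.subtype c • x)
    [IsSimpleModule (MonoidAlgebra k G) V] {U : Submodule (MonoidAlgebra k H) V} (hU : U ≠ ⊤) :
    ⨅ g, twist hres g U = ⊥ := by
  have hcore : twistCore hres U ≠ ⊤ := fun htop => hU <| eq_top_iff.2 fun x _ => by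
    simpa [twist_one] using (mem_iInf _).1 (htop ▸ mem_top : x ∈ twistCore hres U) 1
  have hbot := (IsSimpleOrder.eq_bot_or_eq_top (twistCore hres U)).resolve_right hcore
  refine eq_bot_iff.2 fun x hx => ?_
  have hx' : x ∈ twistCore hres U := hx
  rw [hbot, mem_bot] at hx'
  exact (mem_bot _).2 hx'

/-- (Clifford's theorem)  Let `k` be a field, `G` a group, and `H` a normal subgroup of `G`
of finite index `n`.  Let `V` be a simple module over the group algebra `MonoidAlgebra k G`,
regarded as a module over `MonoidAlgebra k H` by restriction along the inclusion `H → G`.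
Then there exist `m ≤ n` simple `MonoidAlgebra k H`-modules `W 0, …, W (m-1)` and an
injective `MonoidAlgebra k H`-linear map from `V` into their direct sum `∀ i, W i`;
in particular `V` is a semisimple `MonoidAlgebra k H`-module. -/
theorem clifford_theorem (k : Type u) [Field k] (G : Type v) [Group G]
    (H : Subgroup G) [H.Normal] (n : ℕ) (hn : H.index = n) (hn0 : n ≠ 0)
    (V : Type w) [AddCommGroup V] [Module (MonoidAlgebra k G) V]
    [Module (MonoidAlgebra k ↥H) V]
    (hres : ∀ (x : MonoidAlgebra k ↥H) (v : V),
      x • v = (MonoidAlgebra.mapDomainRingHom k H.subtype x) • v)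
    (hV : IsSimpleModule (MonoidAlgebra k G) V) :
    (∃ m : ℕ, m ≤ n ∧
      ∃ W : Fin m → ModuleCat.{w} (MonoidAlgebra k ↥H),
        (∀ i, IsSimpleModule (MonoidAlgebra k ↥H) (W i)) ∧
        ∃ f : V →ₗ[MonoidAlgebra k ↥H] ((i : Fin m) → W i), Function.Injective f) ∧
    IsSemisimpleModule (MonoidAlgebra k ↥H) V := by
  have : H.FiniteIndex := Subgroup.finiteIndex_iff.2 (hn ▸ hn0)
  have : Module.Finite (MonoidAlgebra k H) V := moduleFinite_of_finiteIndex hres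
  have : Nontrivial V := IsSimpleModule.nontrivial (MonoidAlgebra k G) V
  obtain ⟨U, hU⟩ := IsCoatomic.exists_coatom (Submodule (MonoidAlgebra k H) V)
  let e : Fin n ≃ G ⧸ H := (Finite.equivFinOfCardEq hn).symm
  let W (i : Fin n) := twist hres (e i).out U
  have hW (i : Fin n) : IsSimpleModule (MonoidAlgebra k H) (V ⧸ W i) :=
    isSimpleModule_iff_isCoatom.2 (isCoatom_twist hres hU _)
  let f := LinearMap.pi fun i => (W i).mkQ
  have hf : Function.Injective f := by
    rw [← LinearMap.ker_eq_bot, LinearMap.ker_pi, eq_bot_iff, ← iInf_twist_eq_bot hres hU.1]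
    refine le_iInf fun g => iInf_le_of_le (e.symm (QuotientGroup.mk g)) ?_
    simp only [W, Submodule.ker_mkQ, Equiv.apply_symm_apply, twist_out_mk, le_rfl]
  exact ⟨⟨n, le_rfl, fun i => ModuleCat.of _ (V ⧸ W i), hW, f, hf⟩, .of_injective f hf⟩
end
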